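/- arXiv:1707.03457 — 5 statements merged into one kernel-verified Lean document; each statement's English description precedes it below -/
import Mathlib

section
/- Every nonempty string over a finite alphabet decomposes into at most |Ω| blocks each beginning and ending with the same symbol: for every finite alphabet Ω and every nonempty string w over Ω there exist n with 1 ≤ n ≤ |Ω| and nonempty strings w_1, …, w_n with w = w_1 w_2 ⋯ w_n such that for each i the first and last symbols of w_i are equal. -/
/-!
Let `a` be the first symbol of `w`, and cut `w` right after the last occurrence of `a`.
The prefix begins and ends with `a`, and the remaining suffix avoids `a`, so by induction it
splits into at most (number of distinct symbols of `w`) - 1 blocks.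
-/

namespace List

variable {α : Type*}

theorem exists_eq_append_getLast?_eq_of_mem [DecidableEq α] {a : α} :
    ∀ {w : List α}, a ∈ w → ∃ u v, w = u ++ v ∧ u.getLast? = some a ∧ a ∉ v := by
  intro w
  induction w using List.reverseRecOn with
  | nil => simp
  | append_singleton s b ih =>
    intro ha
    by_cases hb : b = a
    · exact ⟨s ++ [b], [], by simp, by simp [hb], by simp⟩
    · obtain ⟨u, v, rfl, hu, hv⟩ := ih (by simpa [Ne.symm hb] using ha)
      exact ⟨u, v ++ [b], by simp, hu, by simp [hv, Ne.symm hb]⟩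

theorem exists_flatten_eq_of_head?_eq_getLast? [DecidableEq α] (w : List α) :
    ∃ ws : List (List α), ws.flatten = w ∧ ws.length ≤ w.toFinset.card ∧
      ∀ b ∈ ws, b ≠ [] ∧ b.head? = b.getLast? := by
  match w with
  | [] => exact ⟨[], rfl, le_rfl, by simp⟩
  | a :: t =>
    obtain ⟨u, v, hw, hu, hav⟩ :=
      exists_eq_append_getLast?_eq_of_mem (w := a :: t) mem_cons_self
    have hu_ne : u ≠ [] := by rintro rfl; simp at hu
    have hu_head : u.head? = some a := by
      simpa [head?_append_of_ne_nil _ hu_ne] using (congrArg head? hw).symm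
    have hv_sub : v.toFinset ⊆ (a :: t).toFinset.erase a := fun x hx => by
      rw [mem_toFinset] at hx
      exact Finset.mem_erase.2 ⟨fun h => hav (h ▸ hx), by simp [hw, hx]⟩
    have hv_shorter : v.length ≤ t.length := by
      have := congrArg length hw
      simp only [length_cons, length_append] at this
      have := length_pos_iff.2 hu_ne
      omega
    obtain ⟨ws, hflat, hlen, hblocks⟩ := exists_flatten_eq_of_head?_eq_getLast? v
    refine ⟨u :: ws, by simp [hflat, hw], ?_, ?_⟩
    · calc (u :: ws).length ≤ ((a :: t).toFinset.erase a).card + 1 := by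
            simpa using hlen.trans (Finset.card_le_card hv_sub)
        _ = (a :: t).toFinset.card := Finset.card_erase_add_one (by simp)
    · exact forall_mem_cons.2 ⟨⟨hu_ne, hu_head.trans hu.symm⟩, hblocks⟩
termination_by w.length

end List

/-- Every nonempty string over a finite alphabet `Ω` decomposes into at most `|Ω|`
nonempty blocks, each beginning and ending with the same symbol. -/
theorem stmt9 {Ω : Type} [Fintype Ω] (w : List Ω) (hw : w ≠ []) :
    ∃ ws : List (List Ω),
      1 ≤ ws.length ∧ ws.length ≤ Fintype.card Ω ∧ ws.flatten = w ∧
        ∀ wi ∈ ws, wi ≠ [] ∧ wi.head? = wi.getLast? := by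
  classical
  obtain ⟨ws, hflat, hlen, hblocks⟩ := w.exists_flatten_eq_of_head?_eq_getLast?
  have hws : ws ≠ [] := by rintro rfl; exact hw hflat.symm
  exact ⟨ws, List.length_pos_iff.2 hws, hlen.trans (Finset.card_le_univ _), hflat, hblocks⟩
end

section
/- In a context-free grammar generating only strings with balanced parentheses, each nonterminal has a constant parenthesis-balance: let G be a reduced context-free grammar over an alphabet containing distinguished symbols ℓ and r, and for w define c(w) = #_ℓ(w) − #_r(w). If c(w) = 0 for every w ∈ L(G) and moreover every prefix of every w ∈ L(G) has c ≥ 0, then for every nonterminal A of G there is an integer c(A) such that c(w) = c(A) for all terminal strings w derivable from A. -/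
/-! Fix a derivation `S ⇒* u A v` and let `u`, `v` derive terminal words `x`, `y`, so every word `w`
derived from `A` gives a word `x ++ w ++ y` of the language. The balance `#l - #r` is additive
and vanishes on the language, so it equals `-(c(x) + c(y))` on every such `w`. -/

namespace ContextFreeGrammar

variable {T : Type} {g : ContextFreeGrammar T}

lemma Derives.append {u u' v v' : List (Symbol T g.NT)}
    (hu : g.Derives u u') (hv : g.Derives v v') : g.Derives (u ++ v) (u' ++ v') :=
  (hu.append_right v).trans (hv.append_left u')

lemma exists_derives_terminal_of_productive
    (hprod : ∀ A : g.NT, ∃ w : List T, g.Derives [Symbol.nonterminal A] (w.map Symbol.terminal))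
    (s : List (Symbol T g.NT)) : ∃ t : List T, g.Derives s (t.map Symbol.terminal) := by
  induction s with
  | nil => exact ⟨[], Derives.refl _⟩
  | cons x s ih =>
    obtain ⟨t, ht⟩ := ih
    obtain ⟨w, hw⟩ : ∃ w : List T, g.Derives [x] (w.map Symbol.terminal) := by
      cases x with
      | terminal a => exact ⟨[a], Derives.refl _⟩
      | nonterminal A => exact hprod A
    exact ⟨w ++ t, by simpa using hw.append ht⟩

lemma exists_context_mem_language
    (hprod : ∀ A : g.NT, ∃ w : List T, g.Derives [Symbol.nonterminal A] (w.map Symbol.terminal))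
    {A : g.NT} {u v : List (Symbol T g.NT)}
    (huv : g.Derives [Symbol.nonterminal g.initial] (u ++ [Symbol.nonterminal A] ++ v)) :
    ∃ x y : List T, ∀ w : List T,
      g.Derives [Symbol.nonterminal A] (w.map Symbol.terminal) → x ++ w ++ y ∈ g.language := by
  obtain ⟨x, hx⟩ := exists_derives_terminal_of_productive hprod u
  obtain ⟨y, hy⟩ := exists_derives_terminal_of_productive hprod v
  refine ⟨x, y, fun w hw => ?_⟩
  rw [mem_language_iff]
  simpa using huv.trans ((hx.append hw).append hy)

end ContextFreeGrammar

theorem stmt14_general {T : Type} [DecidableEq T] (g : ContextFreeGrammar T) (l r : T)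
    (hreach : ∀ A : g.NT, ∃ u v : List (Symbol T g.NT),
        g.Derives [Symbol.nonterminal g.initial] (u ++ [Symbol.nonterminal A] ++ v))
    (hprod : ∀ A : g.NT, ∃ w : List T,
        g.Derives [Symbol.nonterminal A] (w.map Symbol.terminal))
    (hbal : ∀ w ∈ g.language, (w.count l : ℤ) - (w.count r : ℤ) = 0) :
    ∀ A : g.NT, ∃ z : ℤ, ∀ w : List T,
      g.Derives [Symbol.nonterminal A] (w.map Symbol.terminal) →
      (w.count l : ℤ) - (w.count r : ℤ) = z := by
  intro A
  obtain ⟨u, v, huv⟩ := hreach A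
  obtain ⟨x, y, hxy⟩ := g.exists_context_mem_language hprod huv
  refine ⟨-((x.count l : ℤ) - x.count r) - ((y.count l : ℤ) - y.count r), fun w hw => ?_⟩
  have h := hbal _ (hxy w hw)
  simp only [List.count_append, Nat.cast_add] at h
  linarith

/-- Knuth's lemma on parenthesis grammars: let `g` be a reduced context-free grammar over
an alphabet containing distinguished symbols `l` and `r`, and let
`c(w) = #_l(w) − #_r(w)`. If every word of `L(g)` is balanced (`c(w) = 0`) and every
prefix `u` of every word of `L(g)` satisfies `c(u) ≥ 0`, then every nonterminal `A` of
`g` has a constant balance: there is an integer `c(A)` with `c(w) = c(A)` for every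
terminal word `w` derivable from `A`. -/
theorem stmt14 {T : Type} [DecidableEq T] (g : ContextFreeGrammar T) (l r : T)
    (hlr : l ≠ r)
    (hreach : ∀ A : g.NT, ∃ u v : List (Symbol T g.NT),
        g.Derives [Symbol.nonterminal g.initial] (u ++ [Symbol.nonterminal A] ++ v))
    (hprod : ∀ A : g.NT, ∃ w : List T,
        g.Derives [Symbol.nonterminal A] (w.map Symbol.terminal))
    (hbal : ∀ w ∈ g.language, (w.count l : ℤ) - (w.count r : ℤ) = 0)
    (hpre : ∀ w ∈ g.language, ∀ u : List T, u <+: w →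
        0 ≤ (u.count l : ℤ) - (u.count r : ℤ)) :
    ∀ A : g.NT, ∃ z : ℤ, ∀ w : List T,
      g.Derives [Symbol.nonterminal A] (w.map Symbol.terminal) →
      (w.count l : ℤ) - (w.count r : ℤ) = z :=
  stmt14_general g l r hreach hprod hbal
end

section
/- In a trim (reduced) grammar setting, an almost-growing derivation-size bound holds: suppose every derivation tree node is labeled by a rule, terminal rules (rank-0 rules) and monic rules (rank-1 rules) each contribute at least one lexical occurrence to the generated tree except possibly finitely many initial terminal rules, and the generated object's lexical-symbol count equals the sum of lexical-symbol counts of the rules used. Then for every derivation tree d whose root is not an initial terminal rule, |pos(d)| + 1 ≤ 2·(L(d) + B(d)), where L(d) is the number of lexical occurrences in the value of d and B(d) is the number of leaves of d labeled by nonterminals; in particular |pos(d)| ≤ 2·(L(d) + B(d)) + 1 always. -/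
/-- Derivation trees: every node carries a label (a rule or a big nonterminal)
and a list of subtrees. -/
inductive DTree (A : Type) : Type where
  | node : A → List (DTree A) → DTree A

namespace DTree

variable {A : Type}

/-- The number of positions (nodes) of a derivation tree. -/
def size : DTree A → ℕ
  | node _ ts => 1 + (ts.attach.map (fun x => size x.1)).sum
  decreasing_by simp only [DTree.node.sizeOf_spec]; have := List.sizeOf_lt_of_mem x.2; omega

/-- The label of the root. -/
def rootLabel : DTree A → A
  | node a _ => a

/-- `lexSum lex d` is the sum, over all nodes of `d`, of the number `lex a` of lexical
occurrences contributed by the label `a` of the node; it equals the number of lexical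
occurrences in the value of the derivation tree `d`. -/
def lexSum (lex : A → ℕ) : DTree A → ℕ
  | node a ts => lex a + (ts.attach.map (fun x => lexSum lex x.1)).sum
  decreasing_by simp only [DTree.node.sizeOf_spec]; have := List.sizeOf_lt_of_mem x.2; omega

/-- The number of leaves of `d` whose label is not a rule (i.e. is a big nonterminal). -/
def ntLeaves (isRule : A → Prop) [DecidablePred isRule] : DTree A → ℕ
  | node a ts =>
      (if ts.isEmpty ∧ ¬ isRule a then 1 else 0) +
        (ts.attach.map (fun x => ntLeaves isRule x.1)).sum
  decreasing_by simp only [DTree.node.sizeOf_spec]; have := List.sizeOf_lt_of_mem x.2; omega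

/-- The labels of all nodes of a derivation tree. -/
def allLabels : DTree A → List A
  | node a ts => a :: (ts.attach.map (fun x => allLabels x.1)).flatten
  decreasing_by simp only [DTree.node.sizeOf_spec]; have := List.sizeOf_lt_of_mem x.2; omega

/-- The labels of all non-root nodes of a derivation tree. -/
def nonRootLabels : DTree A → List A
  | node _ ts => (ts.map allLabels).flatten

/-- Well-formedness with respect to a rank function: the number of children of a node
equals the rank of its label. -/
inductive WF (rk : A → ℕ) : DTree A → Prop where
  | node (a : A) (ts : List (DTree A)) :
      ts.length = rk a → (∀ t ∈ ts, WF rk t) → WF rk (node a ts)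

end DTree

/-! By induction, `size t + 1 ≤ 2 * (L t + B t)` for every subtree `t`. At a node labelled `a`
with `k` children, the children's bounds add up to `size - 1 + k ≤ 2 * (ΣL + ΣB)`, so the node
itself only has to pay `2 - k ≤ 2 * (lex a + [a is a nonterminal leaf])`. This is free for
`k ≥ 2`; for `k = 1` it is the lexical occurrence of the monic rule, and for `k = 0` either the
lexical occurrence of a non-initial terminal rule or the nonterminal leaf itself. Initial terminal
rules occur only at the root, and waiving the root's payment costs exactly `1`. -/

namespace DTree

variable {A : Type}

@[simp]
theorem size_node (a : A) (ts : List (DTree A)) :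
    size (node a ts) = 1 + (ts.map size).sum := by
  rw [size]; simp

@[simp]
theorem lexSum_node (lex : A → ℕ) (a : A) (ts : List (DTree A)) :
    lexSum lex (node a ts) = lex a + (ts.map (lexSum lex)).sum := by
  rw [lexSum]; simp

@[simp]
theorem ntLeaves_node (isRule : A → Prop) [DecidablePred isRule] (a : A) (ts : List (DTree A)) :
    ntLeaves isRule (node a ts) =
      (if ts.isEmpty ∧ ¬ isRule a then 1 else 0) + (ts.map (ntLeaves isRule)).sum := by
  rw [ntLeaves]; simp

theorem allLabels_node (a : A) (ts : List (DTree A)) :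
    allLabels (node a ts) = a :: nonRootLabels (node a ts) := by
  rw [allLabels, nonRootLabels]; simp

theorem allLabels_subset_nonRootLabels {t : DTree A} {ts : List (DTree A)} (ht : t ∈ ts)
    (a : A) : allLabels t ⊆ nonRootLabels (node a ts) :=
  (List.sublist_flatten_of_mem (List.mem_map_of_mem ht)).subset

section Growing

variable (rk : A → ℕ) (isRule : A → Prop) [DecidablePred isRule] (lex : A → ℕ)

def Growing (a : A) : Prop :=
  (rk a = 0 → isRule a → 1 ≤ lex a) ∧ (rk a = 1 → 1 ≤ lex a)

variable {rk isRule lex}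

theorem sum_size_add_length_le {ts : List (DTree A)}
    (h : ∀ t ∈ ts, size t + 1 ≤ 2 * (lexSum lex t + ntLeaves isRule t)) :
    (ts.map size).sum + ts.length ≤
      2 * ((ts.map (lexSum lex)).sum + (ts.map (ntLeaves isRule)).sum) := by
  simpa [List.sum_map_add, List.sum_map_mul_left] using List.sum_le_sum h

theorem size_add_one_le {d : DTree A} (hwf : WF rk d)
    (hgrow : ∀ a ∈ allLabels d, Growing rk isRule lex a) :
    size d + 1 ≤ 2 * (lexSum lex d + ntLeaves isRule d) := by
  induction hwf with
  | node a ts hlen _ ih =>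
    rw [allLabels_node] at hgrow
    have hchildren := sum_size_add_length_le fun t ht =>
      ih t ht fun b hb => hgrow b (.tail _ (allLabels_subset_nonRootLabels ht a hb))
    obtain ⟨hleaf, hunary⟩ := hgrow a List.mem_cons_self
    simp only [size_node, lexSum_node, ntLeaves_node]
    match ts, hlen with
    | [], hlen =>
      by_cases hrule : isRule a
      · simp [hrule, hleaf hlen.symm hrule]
      · simp [hrule]
    | [_], hlen =>
      have := hunary hlen.symm
      simp only [List.length_singleton] at hchildren
      simp only [List.isEmpty_cons, Bool.false_eq_true, false_and, if_false]
      omega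
    | _ :: _ :: _, _ =>
      simp only [List.length_cons] at hchildren
      simp only [List.isEmpty_cons, Bool.false_eq_true, false_and, if_false]
      omega

theorem size_le {d : DTree A} (hwf : WF rk d)
    (hgrow : ∀ a ∈ nonRootLabels d, Growing rk isRule lex a) :
    size d ≤ 2 * (lexSum lex d + ntLeaves isRule d) + 1 := by
  obtain ⟨a, ts, -, hwfs⟩ := hwf
  have := sum_size_add_length_le fun t ht =>
    size_add_one_le (hwfs t ht) fun b hb => hgrow b (allLabels_subset_nonRootLabels ht a hb)
  simp only [size_node, lexSum_node, ntLeaves_node]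
  omega

end Growing

end DTree

open DTree in
theorem stmt16_general {A : Type} (rk : A → ℕ) (isRule : A → Prop) [DecidablePred isRule]
    (lex : A → ℕ) (I : Set A)
    (hNTrank : ∀ a : A, ¬ isRule a → rk a = 0)
    (hterm : ∀ a : A, isRule a → rk a = 0 → a ∉ I → 1 ≤ lex a)
    (hmonic : ∀ a : A, isRule a → rk a = 1 → 1 ≤ lex a)
    (d : DTree A) (hwf : WF rk d)
    (hsep : ∀ a ∈ nonRootLabels d, a ∉ I) :
    (rootLabel d ∉ I →
        size d + 1 ≤ 2 * (lexSum lex d + ntLeaves isRule d)) ∧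
      size d ≤ 2 * (lexSum lex d + ntLeaves isRule d) + 1 := by
  have hgrow : ∀ a ∉ I, Growing rk isRule lex a := fun a ha =>
    ⟨fun h0 hrule => hterm a hrule h0 ha,
      fun h1 => hmonic a (not_not.mp fun hnt => by simp [hNTrank a hnt] at h1) h1⟩
  refine ⟨fun hroot => size_add_one_le hwf fun a ha => hgrow a ?_,
    size_le hwf fun a ha => hgrow a (hsep a ha)⟩
  obtain ⟨r, ts⟩ := d
  rw [allLabels_node, List.mem_cons] at ha
  rcases ha with rfl | ha
  · exact hroot
  · exact hsep a ha

open DTree in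
/-- The almost-growing derivation-size bound (inequality (†) of Lemma 3.11): in a setting
where nonterminals have rank `0` and contribute no lexical occurrences, every terminal
(rank-`0`) rule that is not one of the finitely many initial terminal rules `I` and every
monic (rank-`1`) rule contributes at least one lexical occurrence, and initial terminal
rules can occur only at the root of a derivation tree, every derivation tree `d` whose
root is not an initial terminal rule satisfies
`|pos(d)| + 1 ≤ 2·(L(d) + B(d))`, where `L(d)` is the number of lexical occurrences in
the value of `d` and `B(d)` the number of leaves of `d` labeled by nonterminals; in
particular `|pos(d)| ≤ 2·(L(d) + B(d)) + 1` always holds. -/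
theorem stmt16 {A : Type} (rk : A → ℕ) (isRule : A → Prop) [DecidablePred isRule]
    (lex : A → ℕ) (I : Set A) (hIfin : I.Finite)
    (hNTrank : ∀ a : A, ¬ isRule a → rk a = 0)
    (hNTlex : ∀ a : A, ¬ isRule a → lex a = 0)
    (hI : ∀ a ∈ I, isRule a ∧ rk a = 0)
    (hterm : ∀ a : A, isRule a → rk a = 0 → a ∉ I → 1 ≤ lex a)
    (hmonic : ∀ a : A, isRule a → rk a = 1 → 1 ≤ lex a)
    (d : DTree A) (hwf : WF rk d)
    (hsep : ∀ a ∈ nonRootLabels d, a ∉ I) :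
    (rootLabel d ∉ I →
        size d + 1 ≤ 2 * (lexSum lex d + ntLeaves isRule d)) ∧
      size d ≤ 2 * (lexSum lex d + ntLeaves isRule d) + 1 :=
  stmt16_general rk isRule lex I hNTrank hterm hmonic d hwf hsep
end

section
/- If an MCFTG-style grammar is almost Δ-growing, then it has finite Δ-ambiguity: abstractly, let V : D → T be a map from a set D of derivation trees to generated trees such that for every d ∈ D the number of Δ-labeled positions of V(d) satisfies |pos(d)| ≤ 2·|pos_Δ(V(d))| + 1, and such that for each fixed size bound there are only finitely many derivation trees of that size. Then for every n the set {V(d) : d ∈ D, |pos_Δ(V(d))| = n} is finite; hence {t ∈ V(D) : t has exactly n occurrences of Δ-symbols} is finite for every n. -/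
theorem Set.finite_preimage_singleton_of_le_bound {D : Type*} {sz c : D → ℕ} (bound : ℕ → ℕ)
    (hle : ∀ d, sz d ≤ bound (c d)) (hfin : ∀ k, (sz ⁻¹' {k}).Finite) (n : ℕ) :
    (c ⁻¹' {n}).Finite :=
  ((Set.finite_Iic (bound n)).preimage' fun k _ => hfin k).subset
    fun d hd => (hle d).trans_eq (congrArg bound hd)

/-- Almost-growing grammars are finitely ambiguous (abstract version of Lemma 3.11):
if `V : D → T` maps derivation trees to generated trees, `sz d ≤ 2·lexcount (V d) + 1`
for every derivation tree `d`, and there are only finitely many derivation trees of each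
size, then for every `n` only finitely many derivation trees have a value with exactly
`n` lexical occurrences, and hence only finitely many generated trees have exactly `n`
lexical occurrences. -/
theorem stmt17 {D T : Type} (V : D → T) (sz : D → ℕ) (lexcount : T → ℕ)
    (h1 : ∀ d : D, sz d ≤ 2 * lexcount (V d) + 1)
    (h2 : ∀ n : ℕ, {d : D | sz d = n}.Finite) :
    (∀ n : ℕ, {d : D | lexcount (V d) = n}.Finite) ∧
      ∀ n : ℕ, {t : T | t ∈ Set.range V ∧ lexcount t = n}.Finite := by
  have finite_derivations : ∀ n : ℕ, {d : D | lexcount (V d) = n}.Finite :=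
    Set.finite_preimage_singleton_of_le_bound (c := lexcount ∘ V) (fun n => 2 * n + 1) h1 h2
  refine ⟨finite_derivations, fun n => ((finite_derivations n).image V).subset ?_⟩
  rintro _ ⟨⟨d, rfl⟩, hd⟩
  exact ⟨d, hd, rfl⟩
end

section
/- Sufficiency of the skeleton decomposition bound: for every ranked alphabet Ω and every tree u over Ω with variables such that u is not itself a variable and contains at least one variable occurrence, there exist m ≥ 1, a footed pattern u_ε of rank m over Ω (a pattern having a node all of whose m children are the variables x_1,…,x_m in order), and trees u_1,…,u_m such that u = u_ε[x_i ← u_i | 1 ≤ i ≤ m] and for every i with u_i not a variable, the number of variable occurrences in u_i is strictly smaller than that in u. -/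
inductive PTree (S : Type) : Type where
  | var  : ℕ → PTree S
  | node : S → List (PTree S) → PTree S

namespace PTree

variable {S D O : Type}

/-- The number of occurrences of the variable `x_i` in a tree. -/
def countVar (i : ℕ) : PTree S → ℕ
  | var j => if j = i then 1 else 0
  | node _ ts => (ts.attach.map (fun x => countVar i x.1)).sum
  decreasing_by simp only [PTree.node.sizeOf_spec]; have := List.sizeOf_lt_of_mem x.2; omega

/-- The number of occurrences of the symbol `s` in a tree. -/
def countSym [DecidableEq S] (s : S) : PTree S → ℕ
  | var _ => 0
  | node s' ts => (if s' = s then 1 else 0) + (ts.attach.map (fun x => countSym s x.1)).sum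
  decreasing_by simp only [PTree.node.sizeOf_spec]; have := List.sizeOf_lt_of_mem x.2; omega

/-- First-order substitution: replace each variable `x_i` by `f i`. -/
def subst (f : ℕ → PTree S) : PTree S → PTree S
  | var i => f i
  | node s ts => node s (ts.attach.map (fun x => subst f x.1))
  decreasing_by simp only [PTree.node.sizeOf_spec]; have := List.sizeOf_lt_of_mem x.2; omega

/-- The tree map `ĥ` induced by a tree homomorphism `h`. -/
def hmap (h : S → PTree D) : PTree S → PTree D
  | var i => var i
  | node s ts =>
      subst (fun i => (ts.attach.map (fun x => hmap h x.1)).getD (i - 1) (var i)) (h s)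
  decreasing_by simp only [PTree.node.sizeOf_spec]; have := List.sizeOf_lt_of_mem x.2; omega

/-- Well-formedness of a tree over a ranked alphabet: the number of children of
a node equals the rank of its label. -/
inductive WF (rk : S → ℕ) : PTree S → Prop where
  | var (i : ℕ) : WF rk (var i)
  | node (s : S) (ts : List (PTree S)) :
      ts.length = rk s → (∀ t ∈ ts, WF rk t) → WF rk (node s ts)

/-- `t` is a `k`-ary pattern: each of the variables `x_1, …, x_k` occurs exactly once
in `t`, and no other variable occurs in `t`. -/
def IsPattern (k : ℕ) (t : PTree S) : Prop :=
  ∀ i : ℕ, countVar i t = if 1 ≤ i ∧ i ≤ k then 1 else 0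

/-- The left-to-right sequence of (indices of) variable occurrences in a tree. -/
def varYield : PTree S → List ℕ
  | var i => [i]
  | node _ ts => (ts.attach.map (fun x => varYield x.1)).flatten
  decreasing_by simp only [PTree.node.sizeOf_spec]; have := List.sizeOf_lt_of_mem x.2; omega

/-- The subtree at a given position (children of a node are numbered `0, 1, …`). -/
def subt? : List ℕ → PTree S → Option (PTree S)
  | [], t => some t
  | _ :: _, var _ => none
  | i :: p, node _ ts =>
      match ts[i]? with
      | some t => subt? p t
      | none => none

/-- Plug the tree `u` into the hole `□` (encoded as the variable `x_0`) of a context `c`. -/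
def plug (c u : PTree S) : PTree S :=
  subst (fun i => if i = 0 then u else var i) c

/-- `init(s) = s(x_1, …, x_{rk s})`. -/
def initT (rk : S → ℕ) (s : S) : PTree S :=
  node s ((List.range (rk s)).map (fun i => var (i + 1)))

/-- The tree homomorphism corresponding to the second-order substitution `[σs ← us]`:
it maps the `i`-th symbol of `σs` to the `i`-th pattern of `us` and any other symbol
`τ` to `init(τ)`. -/
def soHom [DecidableEq S] (rk : S → ℕ) (σs : List S) (us : List (PTree S)) : S → PTree S :=
  fun s => us.getD (σs.idxOf s) (initT rk s)

/-- Second-order substitution `t[σs ← us]`. -/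
def soSubst [DecidableEq S] (rk : S → ℕ) (σs : List S) (us : List (PTree S)) :
    PTree S → PTree S :=
  hmap (soHom rk σs us)

/-- The symbol `s` occurs in the tree `t`. -/
def Occurs [DecidableEq S] (s : S) (t : PTree S) : Prop :=
  0 < countSym s t

/-- A tree of rank `k` is footed if `k = 0`, or `k ≥ 1` and it has a foot node:
a position labeled by a symbol of rank `k` whose `i`-th child is the variable `x_i`. -/
def Footed (rk : S → ℕ) (k : ℕ) (t : PTree S) : Prop :=
  k = 0 ∨ ∃ (p : List ℕ) (s : S) (cs : List (PTree S)),
    subt? p t = some (node s cs) ∧ rk s = k ∧ ∀ i < k, cs[i]? = some (var (i + 1))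

end PTree

/-!
Descend from the root of `u` as long as the current node has a child that is not a variable
and carries all variable occurrences; its siblings are then ground and stay in the pattern.
At the node `s(t_1, …, t_k)` where the descent stops, replace the subtree by
`init(s) = s(x_1, …, x_k)`: this gives a footed pattern, the `u_i` are the `t_i`, and a `t_i`
that is not a variable has fewer variable occurrences than `u`, for otherwise the descent
would have continued into it.
-/

namespace PTree

variable {S : Type}

@[elab_as_elim]
theorem ind {motive : PTree S → Prop} (var : ∀ i, motive (PTree.var i))
    (node : ∀ s ts, (∀ t ∈ ts, motive t) → motive (PTree.node s ts)) : ∀ t, motive t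
  | .var i => var i
  | .node s ts => node s ts fun t _ => ind var node t
  decreasing_by
    simp only [PTree.node.sizeOf_spec]; have := List.sizeOf_lt_of_mem ‹t ∈ ts›; omega

@[simp]
theorem varYield_var (i : ℕ) : varYield (var i : PTree S) = [i] := by
  rw [varYield]

@[simp]
theorem varYield_node (s : S) (ts : List (PTree S)) :
    varYield (node s ts) = (ts.map varYield).flatten := by
  rw [varYield]; simp

@[simp]
theorem countVar_var (i j : ℕ) : countVar i (var j : PTree S) = if j = i then 1 else 0 := by
  rw [countVar]

@[simp]
theorem countVar_node (i : ℕ) (s : S) (ts : List (PTree S)) :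
    countVar i (node s ts) = (ts.map (countVar i)).sum := by
  rw [countVar]; simp

@[simp]
theorem subst_var (f : ℕ → PTree S) (i : ℕ) : subst f (var i) = f i := by
  rw [subst]

@[simp]
theorem subst_node (f : ℕ → PTree S) (s : S) (ts : List (PTree S)) :
    subst f (node s ts) = node s (ts.map (subst f)) := by
  rw [subst]; simp

theorem countVar_eq_count_varYield (i : ℕ) (t : PTree S) :
    countVar i t = (varYield t).count i := by
  induction t using ind with
  | var j => simp [List.count_singleton]
  | node s ts ih =>
    simp only [countVar_node, varYield_node, List.count_flatten, List.map_map]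
    exact congrArg List.sum (List.map_congr_left ih)

theorem subst_eq_self_of_varYield_eq_nil (f : ℕ → PTree S) {t : PTree S}
    (h : varYield t = []) : subst f t = t := by
  induction t using ind with
  | var j => simp at h
  | node s ts ih =>
    simp only [varYield_node, List.flatten_eq_nil_iff, List.mem_map] at h
    rw [subst_node, List.map_congr_left (fun t ht => ih t ht (h _ ⟨t, ht, rfl⟩)), List.map_id']

section initT

variable (rk : S → ℕ) (s : S)

theorem varYield_initT : varYield (initT rk s) = (List.range (rk s)).map (· + 1) := by
  simp only [initT, varYield_node, List.map_map, Function.comp_def, varYield_var]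
  exact List.map_eq_flatMap.symm

theorem wf_initT : WF rk (initT rk s) :=
  WF.node _ _ (by simp) (by simp [WF.var])

theorem isPattern_initT : IsPattern (rk s) (initT rk s) := by
  intro i
  have hnodup : ((List.range (rk s)).map (· + 1)).Nodup :=
    List.nodup_range.map (add_left_injective 1)
  rw [countVar_eq_count_varYield, varYield_initT, hnodup.count]
  congr 1
  simp only [List.mem_map, List.mem_range, eq_iff_iff]
  constructor
  · rintro ⟨k, hk, rfl⟩; omega
  · intro h; exact ⟨i - 1, by omega, by omega⟩

theorem footed_initT : Footed rk (rk s) (initT rk s) :=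
  Or.inr ⟨[], s, _, rfl, rfl, fun i hi => by simp [hi]⟩

theorem subst_initT {ts : List (PTree S)} (hts : ts.length = rk s) :
    subst (fun i => ts.getD (i - 1) (var i)) (initT rk s) = node s ts := by
  simp only [initT, subst_node, List.map_map, node.injEq, true_and]
  refine List.ext_getElem (by simp [hts]) fun k _ hk => ?_
  simp [List.getElem?_eq_getElem hk]

end initT

section nodeAppendCons

variable {l₁ l₂ : List (PTree S)} {s : S}

theorem varYield_eq_nil_of_length_varYield_node_le {t : PTree S}
    (h : (varYield (node s (l₁ ++ t :: l₂))).length ≤ (varYield t).length) :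
    (∀ t' ∈ l₁, varYield t' = []) ∧ ∀ t' ∈ l₂, varYield t' = [] := by
  simp only [varYield_node, List.map_append, List.map_cons, List.flatten_append,
    List.flatten_cons, List.length_append] at h
  have h₁ : (l₁.map varYield).flatten = [] := List.eq_nil_of_length_eq_zero (by omega)
  have h₂ : (l₂.map varYield).flatten = [] := List.eq_nil_of_length_eq_zero (by omega)
  simp only [List.flatten_eq_nil_iff, List.mem_map, forall_exists_index, and_imp,
    forall_apply_eq_imp_iff₂] at h₁ h₂
  exact ⟨h₁, h₂⟩

theorem varYield_node_append_cons
    (h₁ : ∀ t ∈ l₁, varYield t = []) (h₂ : ∀ t ∈ l₂, varYield t = [])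
    (c : PTree S) :
    varYield (node s (l₁ ++ c :: l₂)) = varYield c := by
  have e₁ : (l₁.map varYield).flatten = [] := by simpa using h₁
  have e₂ : (l₂.map varYield).flatten = [] := by simpa using h₂
  simp only [varYield_node, List.map_append, List.map_cons, List.flatten_append,
    List.flatten_cons, e₁, e₂, List.nil_append, List.append_nil]

theorem isPattern_node_append_cons
    (h₁ : ∀ t ∈ l₁, varYield t = []) (h₂ : ∀ t ∈ l₂, varYield t = [])
    {m : ℕ} {c : PTree S} (hc : IsPattern m c) :
    IsPattern m (node s (l₁ ++ c :: l₂)) := fun i => by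
  simpa only [countVar_eq_count_varYield, varYield_node_append_cons h₁ h₂] using hc i

theorem subst_node_append_cons
    (h₁ : ∀ t ∈ l₁, varYield t = []) (h₂ : ∀ t ∈ l₂, varYield t = [])
    (f : ℕ → PTree S) (c : PTree S) :
    subst f (node s (l₁ ++ c :: l₂)) = node s (l₁ ++ subst f c :: l₂) := by
  rw [subst_node, List.map_append, List.map_cons,
    List.map_congr_left (fun t ht => subst_eq_self_of_varYield_eq_nil f (h₁ t ht)),
    List.map_congr_left (fun t ht => subst_eq_self_of_varYield_eq_nil f (h₂ t ht)),
    List.map_id', List.map_id']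

theorem footed_node_append_cons {rk : S → ℕ} {m : ℕ} {c : PTree S} (hc : Footed rk m c) :
    Footed rk m (node s (l₁ ++ c :: l₂)) := by
  obtain hm | ⟨p, s', cs, hp, hrk, hfoot⟩ := hc
  · exact Or.inl hm
  · exact Or.inr ⟨l₁.length :: p, s', cs, by simpa [subt?] using hp, hrk, hfoot⟩

theorem WF.node_append_cons {rk : S → ℕ} {t c : PTree S}
    (ht : WF rk (PTree.node s (l₁ ++ t :: l₂))) (hc : WF rk c) :
    WF rk (PTree.node s (l₁ ++ c :: l₂)) := by
  cases ht with
  | node _ _ hlen hts =>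
    refine WF.node _ _ (by simpa using hlen) fun t' ht' => ?_
    simp only [List.mem_append, List.mem_cons] at ht'
    rcases ht' with ht' | rfl | ht'
    · exact hts t' (by simp [ht'])
    · exact hc
    · exact hts t' (by simp [ht'])

end nodeAppendCons

def IsFootedDecomposition (rk : S → ℕ) (u : PTree S) (m : ℕ) (uε : PTree S)
    (us : List (PTree S)) : Prop :=
  1 ≤ m ∧ us.length = m ∧ WF rk uε ∧ IsPattern m uε ∧ Footed rk m uε ∧
    u = subst (fun i => us.getD (i - 1) (var i)) uε ∧
    ∀ ui ∈ us, (∀ j : ℕ, ui ≠ var j) → (varYield ui).length < (varYield u).length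

theorem isFootedDecomposition_initT {rk : S → ℕ} {s : S} {ts : List (PTree S)}
    (hts : ts.length = rk s) (hrk : 1 ≤ rk s)
    (hlt : ∀ t ∈ ts, (∀ j : ℕ, t ≠ var j) →
      (varYield t).length < (varYield (node s ts)).length) :
    IsFootedDecomposition rk (node s ts) (rk s) (initT rk s) ts :=
  ⟨hrk, hts, wf_initT rk s, isPattern_initT rk s, footed_initT rk s,
    (subst_initT rk s hts).symm, hlt⟩

theorem IsFootedDecomposition.node_append_cons {rk : S → ℕ} {s : S} {l₁ l₂ : List (PTree S)}
    {t : PTree S} {m : ℕ} {cε : PTree S} {cs : List (PTree S)}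
    (hdec : IsFootedDecomposition rk t m cε cs) (hwf : WF rk (node s (l₁ ++ t :: l₂)))
    (h₁ : ∀ t ∈ l₁, varYield t = []) (h₂ : ∀ t ∈ l₂, varYield t = []) :
    IsFootedDecomposition rk (node s (l₁ ++ t :: l₂)) m (node s (l₁ ++ cε :: l₂)) cs := by
  obtain ⟨hm, hlen, hwfε, hpat, hfoot, hsubst, hlt⟩ := hdec
  refine ⟨hm, hlen, hwf.node_append_cons hwfε, isPattern_node_append_cons h₁ h₂ hpat,
    footed_node_append_cons hfoot, ?_, ?_⟩
  · rw [subst_node_append_cons h₁ h₂, ← hsubst]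
  · rwa [varYield_node_append_cons h₁ h₂]

theorem exists_isFootedDecomposition (rk : S → ℕ) (u : PTree S) (hwf : WF rk u)
    (hnotvar : ∀ i : ℕ, u ≠ var i) (hvars : 1 ≤ (varYield u).length) :
    ∃ m uε us, IsFootedDecomposition rk u m uε us := by
  induction u using ind with
  | var i => exact absurd rfl (hnotvar i)
  | node s ts ih =>
    obtain ⟨hts, hwfts⟩ : ts.length = rk s ∧ ∀ t ∈ ts, WF rk t := by
      cases hwf with | node _ _ hlen hwfts => exact ⟨hlen, hwfts⟩
    by_cases hchild : ∃ t ∈ ts, (∀ i, t ≠ var i) ∧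
        (varYield (node s ts)).length ≤ (varYield t).length
    · obtain ⟨t, ht, htvar, hle⟩ := hchild
      obtain ⟨l₁, l₂, rfl⟩ := List.append_of_mem ht
      obtain ⟨h₁, h₂⟩ := varYield_eq_nil_of_length_varYield_node_le hle
      obtain ⟨m, cε, cs, hdec⟩ := ih t ht (hwfts t ht) htvar (hvars.trans hle)
      exact ⟨m, _, cs, hdec.node_append_cons hwf h₁ h₂⟩
    · push Not at hchild
      have hrk : 1 ≤ rk s := by
        rw [← hts]
        rcases ts with _ | _
        · simp at hvars
        · simp
      exact ⟨rk s, initT rk s, ts, isFootedDecomposition_initT hts hrk hchild⟩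

end PTree

open PTree in
/-- Decomposition into footed patterns (basic fact of Theorem 5.1): every tree `u` over a
ranked alphabet `Ω` with variables that is not itself a variable and contains at least one
variable occurrence can be written as `u = u_ε[x_i ← u_i | 1 ≤ i ≤ m]` for some `m ≥ 1`,
a footed pattern `u_ε` of rank `m` and trees `u_1, …, u_m` such that every `u_i` that is
not a variable has strictly fewer variable occurrences than `u`. -/
theorem stmt18 {S : Type} (rk : S → ℕ) (u : PTree S)
    (hwf : WF rk u)
    (hnotvar : ∀ i : ℕ, u ≠ PTree.var i)
    (hvars : 1 ≤ (varYield u).length) :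
    ∃ (m : ℕ) (uε : PTree S) (us : List (PTree S)),
      1 ≤ m ∧ us.length = m ∧
      WF rk uε ∧ IsPattern m uε ∧ Footed rk m uε ∧
      u = subst (fun i => us.getD (i - 1) (PTree.var i)) uε ∧
      ∀ ui ∈ us, (∀ j : ℕ, ui ≠ PTree.var j) →
        (varYield ui).length < (varYield u).length :=
  exists_isFootedDecomposition rk u hwf hnotvar hvars
end
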